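/- arXiv:1603.00804 — 2 statements merged into one kernel-verified Lean document; each statement's English description precedes it below -/
import Mathlib

section
/- Let (W,W') be an exchangeable pair of real random variables in L⁴(P) (i.e. (W,W') and (W',W) have the same joint distribution) and let 𝓖 be a sub-σ-field of 𝓕 with σ(W) ⊆ 𝓖, such that E[W' − W | 𝓖] = −λW for some λ > 0. Then (1/(4λ))·E[(W' − W)⁴] = 3·E[ W² · (1/(2λ))·E[(W' − W)² | 𝓖] ] − E[W⁴]. -/
open MeasureTheory Filter

/-! With `D = W' - W`, the polynomial `(y - x)⁴ - 6 x² (y - x)² - 4 x³ (y - x)` is antisymmetric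
in `(x, y)`, so exchangeability gives `E[D⁴] = 6 E[W² D²] + 4 E[W³ D]`. Since `W` is
`𝓖`-measurable, conditioning on `𝓖` turns `E[W³ D]` into `-λ E[W⁴]` and `E[W² D²]` into
`E[W² E[D² | 𝓖]]`. -/

lemma pow_mul_pow_le_pow_add_pow {R : Type*} [Semiring R] [LinearOrder R] [IsOrderedRing R]
    {x y : R} (hx : 0 ≤ x) (hy : 0 ≤ y) {a b n : ℕ} (hab : a + b = n) :
    x ^ a * y ^ b ≤ x ^ n + y ^ n := by
  calc x ^ a * y ^ b ≤ max x y ^ a * max x y ^ b := by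
        gcongr
        exacts [le_max_left x y, le_max_right x y]
    _ = max x y ^ n := by rw [← pow_add, hab]
    _ ≤ x ^ n + y ^ n := by
        rcases le_total x y with h | h
        · exact (max_eq_right h).symm ▸ le_add_of_nonneg_left (pow_nonneg hx n)
        · exact (max_eq_left h).symm ▸ le_add_of_nonneg_right (pow_nonneg hy n)

lemma MeasureTheory.MemLp.integrable_pow_mul_pow {Ω : Type*} {m0 : MeasurableSpace Ω}
    {μ : Measure Ω} {X Y : Ω → ℝ} {a b n : ℕ} (hX : MemLp X n μ) (hY : MemLp Y n μ)
    (hab : a + b = n) (hn : n ≠ 0) :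
    Integrable (fun ω => X ω ^ a * Y ω ^ b) μ := by
  refine ((hX.integrable_norm_pow hn).add (hY.integrable_norm_pow hn)).mono'
    ((hX.1.pow a).mul (hY.1.pow b)) (Eventually.of_forall fun ω => ?_)
  simp only [Pi.add_apply, norm_mul, norm_pow]
  exact pow_mul_pow_le_pow_add_pow (norm_nonneg (X ω)) (norm_nonneg (Y ω)) hab

section Exchangeable

variable {Ω α E : Type*} {m0 : MeasurableSpace Ω} {μ : Measure Ω} [MeasurableSpace α]
  [NormedAddCommGroup E] [NormedSpace ℝ E] {X Y : Ω → α}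

lemma integral_comp_swap_of_exchangeable (hX : AEMeasurable X μ) (hY : AEMeasurable Y μ)
    (hexch : μ.map (fun ω => (X ω, Y ω)) = μ.map (fun ω => (Y ω, X ω)))
    {f : α × α → E} (hf : StronglyMeasurable f) :
    ∫ ω, f (X ω, Y ω) ∂μ = ∫ ω, f (Y ω, X ω) ∂μ := by
  rw [← integral_map (hX.prodMk hY) hf.aestronglyMeasurable, hexch,
    integral_map (hY.prodMk hX) hf.aestronglyMeasurable]

lemma integral_comp_eq_zero_of_exchangeable (hX : AEMeasurable X μ) (hY : AEMeasurable Y μ)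
    (hexch : μ.map (fun ω => (X ω, Y ω)) = μ.map (fun ω => (Y ω, X ω)))
    {f : α × α → E} (hf : StronglyMeasurable f) (hanti : ∀ x y, f (y, x) = -f (x, y)) :
    ∫ ω, f (X ω, Y ω) ∂μ = 0 := by
  have : IsAddTorsionFree E := .of_isTorsionFree ℝ E
  have h := integral_comp_swap_of_exchangeable hX hY hexch hf
  rw [funext fun ω => hanti (X ω) (Y ω), integral_neg] at h
  exact self_eq_neg.mp h

end Exchangeable

lemma integral_mul_condExp_of_stronglyMeasurable {Ω : Type*} {m m0 : MeasurableSpace Ω}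
    {μ : Measure Ω} (hm : m ≤ m0) [SigmaFinite (μ.trim hm)] {f g : Ω → ℝ}
    (hf : StronglyMeasurable[m] f) (hfg : Integrable (fun ω => f ω * g ω) μ)
    (hg : Integrable g μ) :
    ∫ ω, f ω * μ[g | m] ω ∂μ = ∫ ω, f ω * g ω ∂μ :=
  (integral_congr_ae (condExp_mul_of_stronglyMeasurable_left hf hfg hg).symm).trans
    (integral_condExp hm)

lemma integral_sub_pow_four_of_exchangeable {Ω : Type*} {m0 : MeasurableSpace Ω}
    {μ : Measure Ω} {X Y : Ω → ℝ} (hX : MemLp X 4 μ) (hY : MemLp Y 4 μ)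
    (hexch : μ.map (fun ω => (X ω, Y ω)) = μ.map (fun ω => (Y ω, X ω))) :
    ∫ ω, (Y ω - X ω) ^ 4 ∂μ =
      6 * ∫ ω, X ω ^ 2 * (Y ω - X ω) ^ 2 ∂μ + 4 * ∫ ω, X ω ^ 3 * (Y ω - X ω) ∂μ := by
  have hD : MemLp (fun ω => Y ω - X ω) 4 μ := hY.sub hX
  have i04 : Integrable (fun ω => (Y ω - X ω) ^ 4) μ := by
    simpa using hX.integrable_pow_mul_pow hD (a := 0) rfl four_ne_zero
  have i22 : Integrable (fun ω => X ω ^ 2 * (Y ω - X ω) ^ 2) μ :=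
    hX.integrable_pow_mul_pow hD rfl four_ne_zero
  have i31 : Integrable (fun ω => X ω ^ 3 * (Y ω - X ω)) μ := by
    simpa using hX.integrable_pow_mul_pow hD (a := 3) (b := 1) rfl four_ne_zero
  have hzero := integral_comp_eq_zero_of_exchangeable hX.1.aemeasurable hY.1.aemeasurable hexch
    (f := fun p : ℝ × ℝ => (p.2 - p.1) ^ 4 - 6 * (p.1 ^ 2 * (p.2 - p.1) ^ 2)
      - 4 * (p.1 ^ 3 * (p.2 - p.1)))
    (Continuous.stronglyMeasurable (by fun_prop)) (fun x y => by ring)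
  dsimp only at hzero
  rw [integral_sub, integral_sub i04 (i22.const_mul 6), integral_const_mul,
    integral_const_mul] at hzero
  · linarith
  · exact i04.sub (i22.const_mul 6)
  · exact i31.const_mul 4

theorem exchangeable_pair_fourth_moment_identity
    {Ω : Type*} [m0 : MeasurableSpace Ω] (μ : Measure Ω) [IsProbabilityMeasure μ]
    (W W' : Ω → ℝ) (hW4 : MemLp W 4 μ) (hW'4 : MemLp W' 4 μ)
    (hexch : Measure.map (fun ω => (W ω, W' ω)) μ = Measure.map (fun ω => (W' ω, W ω)) μ)
    (𝓖 : MeasurableSpace Ω) (h𝓖 : 𝓖 ≤ m0)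
    (hW𝓖 : MeasurableSpace.comap W inferInstance ≤ 𝓖)
    (lam : ℝ) (hlam : 0 < lam)
    (hreg : μ[(fun ω => W' ω - W ω) | 𝓖] =ᵐ[μ] fun ω => -lam * W ω) :
    1 / (4 * lam) * ∫ ω, (W' ω - W ω) ^ 4 ∂μ =
      3 * (∫ ω, (W ω) ^ 2 *
            (1 / (2 * lam) * ((μ[(fun ω' => (W' ω' - W ω') ^ 2) | 𝓖]) ω)) ∂μ) -
        ∫ ω, (W ω) ^ 4 ∂μ := by
  have hWG : Measurable[𝓖] W := measurable_iff_comap_le.mpr hW𝓖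
  have hD : MemLp (fun ω => W' ω - W ω) 4 μ := hW'4.sub hW4
  have hW3D : ∫ ω, W ω ^ 3 * (W' ω - W ω) ∂μ = -lam * ∫ ω, W ω ^ 4 ∂μ :=
    calc ∫ ω, W ω ^ 3 * (W' ω - W ω) ∂μ
        = ∫ ω, W ω ^ 3 * μ[(fun ω => W' ω - W ω) | 𝓖] ω ∂μ :=
          (integral_mul_condExp_of_stronglyMeasurable h𝓖 (hWG.pow_const 3).stronglyMeasurable
            (by simpa using hW4.integrable_pow_mul_pow hD (a := 3) (b := 1) rfl four_ne_zero)
            (hD.integrable (by norm_num))).symm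
      _ = ∫ ω, W ω ^ 3 * (-lam * W ω) ∂μ :=
          integral_congr_ae (hreg.mono fun ω hω => congrArg (W ω ^ 3 * ·) hω)
      _ = -lam * ∫ ω, W ω ^ 4 ∂μ := by
          rw [← integral_const_mul]
          congr with ω
          ring
  have hW2D2 : ∫ ω, W ω ^ 2 *
        (1 / (2 * lam) * μ[(fun ω' => (W' ω' - W ω') ^ 2) | 𝓖] ω) ∂μ =
      1 / (2 * lam) * ∫ ω, W ω ^ 2 * (W' ω - W ω) ^ 2 ∂μ := by
    simp_rw [mul_left_comm _ (1 / (2 * lam))]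
    rw [integral_const_mul, integral_mul_condExp_of_stronglyMeasurable h𝓖
      (hWG.pow_const 2).stronglyMeasurable (hW4.integrable_pow_mul_pow hD rfl four_ne_zero)
      (hD.mono_exponent (by norm_num)).integrable_sq]
  rw [integral_sub_pow_four_of_exchangeable hW4 hW'4 hexch, hW3D, hW2D2]
  field_simp
  ring
end

section
/- Let W = f(X_1,…,X_n) ∈ L²(P) be a degenerate U-statistic of order d. Let Y = (Y_1,…,Y_n) be an independent copy of X = (X_1,…,X_n) and α uniformly distributed on [n], with X, Y, α jointly independent; set X'_j := Y_j if α = j and X'_j := X_j otherwise, and W' := f(X'_1,…,X'_n). Then E[W' − W | σ(X_1,…,X_n)] = −(d/n)·W, and in particular E[W' − W | W] = −(d/n)·W. -/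
open MeasureTheory ProbabilityTheory Finset Filter

noncomputable section

/-- The σ-algebra generated by the random variables `X j`, `j ∈ J`. -/
def sigmaGen {Ω : Type*} {n : ℕ} {E : Fin n → Type*} [∀ i, MeasurableSpace (E i)]
    (X : ∀ i, Ω → E i) (J : Finset (Fin n)) : MeasurableSpace Ω :=
  ⨆ i ∈ J, MeasurableSpace.comap (X i) inferInstance

/-- The Hoeffding component of `W` indexed by `J`:
`W_J = ∑_{L ⊆ J} (-1)^{|J|-|L|} E[W | 𝓕_L]`. -/
noncomputable def hoeff {Ω : Type*} [MeasurableSpace Ω] {n : ℕ} {E : Fin n → Type*}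
    [∀ i, MeasurableSpace (E i)] (μ : Measure Ω) (X : ∀ i, Ω → E i)
    (W : Ω → ℝ) (J : Finset (Fin n)) : Ω → ℝ :=
  ∑ L ∈ J.powerset, ((-1 : ℝ) ^ (J.card - L.card)) • μ[W | sigmaGen X L]

/-- The collection `𝓓_d` of all `d`-subsets of `{1,…,n}`. -/
def DD (n d : ℕ) : Finset (Finset (Fin n)) :=
  Finset.univ.filter fun J => J.card = d

/-- `W` is a degenerate U-statistic of order `d` (w.r.t. the data `X`): its Hoeffding
decomposition is `W = ∑_{J ∈ 𝓓_d} W_J`. -/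
def IsDegenUStat {Ω : Type*} [MeasurableSpace Ω] {n : ℕ} {E : Fin n → Type*}
    [∀ i, MeasurableSpace (E i)] (μ : Measure Ω) (X : ∀ i, Ω → E i)
    (W : Ω → ℝ) (d : ℕ) : Prop :=
  W =ᵐ[μ] fun ω => ∑ J ∈ DD n d, hoeff μ X W J ω

/-- The influence quantity `ρ_n² = max_{1 ≤ i ≤ n} ∑_{J ∈ 𝓓_d, i ∈ J} Var(W_J)`. -/
noncomputable def rho2 {Ω : Type*} [MeasurableSpace Ω] {n : ℕ} {E : Fin n → Type*}
    [∀ i, MeasurableSpace (E i)] (μ : Measure Ω) (X : ∀ i, Ω → E i)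
    (W : Ω → ℝ) (d : ℕ) : ℝ :=
  ⨆ i : Fin n, ∑ J ∈ (DD n d).filter (fun J => i ∈ J), variance (hoeff μ X W J) μ

/-!
Resampling coordinate `j` from the independent copy integrates it out, so, `α` being uniform and
independent of `(X, Y)`, `E[W' | X] = (1/n) ∑ⱼ E[W | 𝓕_{[n]∖{j}}]`.

A conditional expectation `E[f(X) | 𝓕_K]` is `f` with the coordinates outside `K` integrated
against their law; iterating shows `E[E[W | 𝓕_L] | 𝓕_K] = E[W | 𝓕_{L∩K}]`. Hence `E[W_J | 𝓕_K]`
is `W_J` when `J ⊆ K` and `0` otherwise: for `j ∈ J \ K` the terms of `W_J` indexed by `L` and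
`L ∪ {j}` cancel. A component `W_J` with `|J| = d` survives in exactly `n - d` of the
`𝓕_{[n]∖{j}}`, which gives `E[W' - W | X] = ((n - d)/n - 1) W = -(d/n) W`; the statement for
`σ(W)` follows by the tower property.
-/

theorem ProbabilityTheory.IndepFun.condExp_comap_eq_integral {Ω β γ : Type*}
    [MeasurableSpace Ω] {μ : Measure Ω} [IsFiniteMeasure μ] [mβ : MeasurableSpace β]
    [MeasurableSpace γ] {Z : Ω → β} {T : Ω → γ} (hind : IndepFun Z T μ)
    (hZ : Measurable Z) (hT : Measurable T) {φ : β → γ → ℝ}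
    (hφ : Measurable (Function.uncurry φ)) (hint : Integrable (fun ω => φ (Z ω) (T ω)) μ) :
    μ[fun ω => φ (Z ω) (T ω) | mβ.comap Z] =ᵐ[μ] fun ω => ∫ t, φ (Z ω) t ∂(μ.map T) := by
  have hprod : μ.map (fun ω => (Z ω, T ω)) = (μ.map Z).prod (μ.map T) :=
    (indepFun_iff_map_prod_eq_prod_map_map hZ.aemeasurable hT.aemeasurable).mp hind
  have hφint : Integrable (Function.uncurry φ) ((μ.map Z).prod (μ.map T)) := by
    rw [← hprod]
    exact (integrable_map_measure hφ.aestronglyMeasurable (hZ.prodMk hT).aemeasurable).mpr hint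
  have hg : StronglyMeasurable fun z => ∫ t, φ z t ∂(μ.map T) :=
    hφ.stronglyMeasurable.integral_prod_right'
  refine (ae_eq_condExp_of_forall_setIntegral_eq hZ.comap_le hint
    (fun s _ _ => ?_) ?_ ?_).symm
  · exact ((integrable_map_measure hg.aestronglyMeasurable hZ.aemeasurable).mp
      hφint.integral_prod_left).integrableOn
  · rintro _ ⟨u, hu, rfl⟩ -
    have hpre : Z ⁻¹' u = (fun ω => (Z ω, T ω)) ⁻¹' (u ×ˢ Set.univ) := by ext; simp
    rw [← setIntegral_map hu hg.aestronglyMeasurable hZ.aemeasurable, hpre]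
    refine Eq.trans ?_ (setIntegral_map (hu.prod .univ) hφ.aestronglyMeasurable
      (hZ.prodMk hT).aemeasurable)
    rw [hprod, setIntegral_prod _ hφint.integrableOn]
    simp only [Measure.restrict_univ, Function.uncurry_apply_pair]
  · exact (hg.measurable.comp (comap_measurable Z)).aestronglyMeasurable

theorem condExp_ae_eq_of_le_of_condExp_ae_eq {Ω : Type*} {m' m m0 : MeasurableSpace Ω}
    {μ : Measure Ω} [IsFiniteMeasure μ] {V U : Ω → ℝ} (hm' : m' ≤ m) (hm : m ≤ m0)
    (h : μ[V | m] =ᵐ[μ] U) (hU : StronglyMeasurable[m'] U) (hUint : Integrable U μ) :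
    μ[V | m'] =ᵐ[μ] U :=
  calc μ[V | m'] =ᵐ[μ] μ[μ[V | m] | m'] := (condExp_condExp_of_le hm' hm).symm
    _ =ᵐ[μ] μ[U | m'] := condExp_congr_ae h
    _ = U := condExp_of_stronglyMeasurable (hm'.trans hm) hU hUint

theorem Finset.sum_powerset_neg_one_pow_smul_eq_zero {α R M : Type*} [DecidableEq α] [Ring R]
    [AddCommGroup M] [Module R M] {J : Finset α} {j : α} (hj : j ∈ J) {g : Finset α → M}
    (hg : ∀ L, g (insert j L) = g L) :
    ∑ L ∈ J.powerset, (-1 : R) ^ (#J - #L) • g L = 0 := by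
  rw [← Finset.insert_erase hj, Finset.sum_powerset_insert (Finset.notMem_erase j J),
    ← Finset.sum_add_distrib]
  refine Finset.sum_eq_zero fun L hL => ?_
  have hjL : j ∉ L := fun h => Finset.notMem_erase j J (Finset.mem_powerset.mp hL h)
  have hcard : #L ≤ #(J.erase j) := Finset.card_le_card (Finset.mem_powerset.mp hL)
  rw [Finset.card_insert_of_notMem hjL, Finset.card_insert_of_notMem (Finset.notMem_erase j J),
    hg, Nat.add_sub_add_right, Nat.succ_sub hcard, pow_succ, mul_neg_one, neg_smul,
    neg_add_cancel]

section Piecewise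

variable {ι : Type*} [DecidableEq ι] {E : ι → Type*} [∀ i, MeasurableSpace (E i)]

theorem measurable_finset_piecewise (K : Finset ι) :
    Measurable fun p : (∀ i, E i) × (∀ i, E i) => K.piecewise p.1 p.2 := by
  refine measurable_pi_lambda _ fun i => ?_
  by_cases hi : i ∈ K
  · simp only [Finset.piecewise, hi, if_true]
    fun_prop
  · simp only [Finset.piecewise, hi, if_false]
    fun_prop

theorem MeasureTheory.Measure.map_piecewise_pi_prod_pi [Fintype ι] (ν : ∀ i, Measure (E i))
    [∀ i, IsProbabilityMeasure (ν i)] (K : Finset ι) :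
    ((Measure.pi ν).prod (Measure.pi ν)).map (fun p => K.piecewise p.1 p.2) = Measure.pi ν := by
  refine (Measure.pi_eq fun s hs => ?_).symm
  have hpre : (fun p : (∀ i, E i) × (∀ i, E i) => K.piecewise p.1 p.2) ⁻¹' Set.univ.pi s
      = Set.univ.pi (K.piecewise s fun _ => Set.univ) ×ˢ
          Set.univ.pi (K.piecewise (fun _ => Set.univ) s) := by
    ext p
    simp only [Set.mem_preimage, Set.mem_pi, Set.mem_univ, true_implies, Set.mem_prod,
      ← forall_and]
    refine forall_congr' fun i => ?_
    by_cases hi : i ∈ K <;> simp [Finset.piecewise, hi]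
  rw [Measure.map_apply (measurable_finset_piecewise K) (.univ_pi hs), hpre, Measure.prod_prod,
    Measure.pi_pi, Measure.pi_pi, ← Finset.prod_mul_distrib]
  refine Finset.prod_congr rfl fun i _ => ?_
  by_cases hi : i ∈ K <;> simp [Finset.piecewise, hi]

end Piecewise

theorem MeasurableSpace.comap_subtype_pi_eq_iSup {Ω ι : Type*} {E : ι → Type*}
    [∀ i, MeasurableSpace (E i)] (X : ∀ i, Ω → E i) (p : ι → Prop) :
    MeasurableSpace.comap (fun ω (i : {i // p i}) => X i ω) MeasurableSpace.pi
      = ⨆ (i) (_ : p i), MeasurableSpace.comap (X i) inferInstance := by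
  simp_rw [MeasurableSpace.pi, MeasurableSpace.comap_iSup, MeasurableSpace.comap_comp]
  rw [iSup_subtype']
  rfl

theorem ProbabilityTheory.iIndepFun.indepFun_subtype_subtype_not {Ω ι : Type*}
    [MeasurableSpace Ω] {μ : Measure Ω} {E : ι → Type*} [∀ i, MeasurableSpace (E i)]
    {X : ∀ i, Ω → E i} (hindep : iIndepFun X μ) (hX : ∀ i, Measurable (X i)) (p : ι → Prop) :
    IndepFun (fun ω (i : {i // p i}) => X i ω) (fun ω (i : {i // ¬p i}) => X i ω) μ := by
  rw [IndepFun_iff_Indep, MeasurableSpace.comap_subtype_pi_eq_iSup,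
    MeasurableSpace.comap_subtype_pi_eq_iSup]
  exact indep_iSup_of_disjoint (fun i => (hX i).comap_le) hindep.iIndep
    (S := {i | p i}) (T := {i | ¬p i}) (Set.disjoint_left.2 fun _ h h' => h' h)

section SigmaGen

variable {Ω : Type*} {n : ℕ} {E : Fin n → Type*} [∀ i, MeasurableSpace (E i)]
  (X : ∀ i, Ω → E i)

theorem sigmaGen_eq_comap (L : Finset (Fin n)) :
    sigmaGen X L = MeasurableSpace.comap (fun ω (i : {i // i ∈ L}) => X i ω)
      MeasurableSpace.pi :=
  (MeasurableSpace.comap_subtype_pi_eq_iSup X (· ∈ L)).symm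

theorem sigmaGen_univ :
    sigmaGen X univ = MeasurableSpace.comap (fun ω i => X i ω) MeasurableSpace.pi := by
  simp_rw [MeasurableSpace.pi, MeasurableSpace.comap_iSup, MeasurableSpace.comap_comp, sigmaGen,
    Finset.mem_univ, iSup_pos]
  rfl

theorem sigmaGen_mono {L K : Finset (Fin n)} (h : L ⊆ K) : sigmaGen X L ≤ sigmaGen X K :=
  biSup_mono fun _ hi => h hi

theorem measurable_sigmaGen_of_dependsOn {β : Type*} [MeasurableSpace β]
    {G : (∀ i, E i) → β} (hG : Measurable G) {L : Finset (Fin n)} (hdep : DependsOn G L) :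
    Measurable[sigmaGen X L] fun ω => G fun i => X i ω := by
  rcases isEmpty_or_nonempty Ω with hΩ | ⟨⟨ω₀⟩⟩
  · exact @Subsingleton.measurable _ _ _ (sigmaGen X L) _ _
  let e := MeasurableEquiv.piEquivPiSubtypeProd E (· ∈ L)
  have hfac : (fun ω => G fun i => X i ω)
      = (fun z => G (e.symm (z, (e fun i => X i ω₀).2))) ∘
          fun ω (i : {i // i ∈ L}) => X i ω :=
    funext fun ω => hdep fun i hi => by simp [e, show i ∈ L from hi]
  rw [sigmaGen_eq_comap, hfac]
  exact (hG.comp (e.symm.measurable.comp measurable_prodMk_right)).comp (comap_measurable _)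

end SigmaGen

theorem sigmaGen_le {Ω : Type*} [m0 : MeasurableSpace Ω] {n : ℕ} {E : Fin n → Type*}
    [∀ i, MeasurableSpace (E i)] {X : ∀ i, Ω → E i} (hX : ∀ i, Measurable (X i))
    (L : Finset (Fin n)) : sigmaGen X L ≤ m0 :=
  iSup₂_le fun i _ => (hX i).comap_le

theorem integrable_hoeff {Ω : Type*} [MeasurableSpace Ω] {μ : Measure Ω} {n : ℕ}
    {E : Fin n → Type*} [∀ i, MeasurableSpace (E i)] (X : ∀ i, Ω → E i) (W : Ω → ℝ)
    (J : Finset (Fin n)) : Integrable (hoeff μ X W J) μ :=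
  integrable_finsetSum' _ fun _ _ => integrable_condExp.smul _

section IntegralOutside

variable {ι : Type*} [DecidableEq ι] {E : ι → Type*} [∀ i, MeasurableSpace (E i)]

def integralOutside (ρ : Measure (∀ i, E i)) (K : Finset ι) (F : (∀ i, E i) → ℝ)
    (x : ∀ i, E i) : ℝ :=
  ∫ y, F (K.piecewise x y) ∂ρ

variable {ρ : Measure (∀ i, E i)} {F : (∀ i, E i) → ℝ}

theorem measurable_integralOutside [SFinite ρ] (hF : Measurable F) (K : Finset ι) :
    Measurable (integralOutside ρ K F) :=
  (hF.comp (measurable_finset_piecewise K)).stronglyMeasurable.integral_prod_right'.measurable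

theorem DependsOn.integralOutside {s : Set ι} (hF : DependsOn F s) (K : Finset ι) :
    DependsOn (integralOutside ρ K F) (s ∩ K) := fun x y hxy => by
  refine integral_congr_ae (.of_forall fun z => hF fun i hi => ?_)
  by_cases hiK : i ∈ K
  · simp [hiK, hxy i ⟨hi, hiK⟩]
  · simp [hiK]

end IntegralOutside

section Hoeffding

variable {Ω : Type*} [MeasurableSpace Ω] {μ : Measure Ω} [IsProbabilityMeasure μ]
  {n : ℕ} {E : Fin n → Type*} [∀ i, MeasurableSpace (E i)] {X : ∀ i, Ω → E i}
  (hX : ∀ i, Measurable (X i)) (hindep : iIndepFun X μ)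
include hX hindep

theorem condExp_sigmaGen_eq_integralOutside {F : (∀ i, E i) → ℝ} (hF : Measurable F)
    (hint : Integrable (fun ω => F fun i => X i ω) μ) (K : Finset (Fin n)) :
    μ[fun ω => F fun i => X i ω | sigmaGen X K] =ᵐ[μ]
      fun ω => integralOutside (μ.map fun ω i => X i ω) K F fun i => X i ω := by
  let e := MeasurableEquiv.piEquivPiSubtypeProd E (· ∈ K)
  have hmerge : ∀ x y, e.symm ((e x).1, (e y).2) = K.piecewise x y := fun x y => by
    ext i; by_cases hi : i ∈ K <;> simp [e, hi]
  have hXv : Measurable fun ω i => X i ω := measurable_pi_lambda _ hX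
  have hW : (fun ω => F fun i => X i ω)
      = fun ω => F (e.symm ((e fun i => X i ω).1, (e fun i => X i ω).2)) := by
    simp only [hmerge, Finset.piecewise_same]
  have hlaw : μ.map (fun ω (i : {i // i ∉ K}) => X i ω)
      = (μ.map fun ω i => X i ω).map fun y => (e y).2 :=
    (Measure.map_map (measurable_snd.comp e.measurable) hXv).symm
  rw [sigmaGen_eq_comap, hW]
  refine ((hindep.indepFun_subtype_subtype_not hX (· ∈ K)).condExp_comap_eq_integral
    (measurable_pi_lambda _ fun i => hX i) (measurable_pi_lambda _ fun i => hX i)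
    (φ := fun z t => F (e.symm (z, t))) (hF.comp e.symm.measurable) (hW ▸ hint)).trans
    (.of_eq (funext fun ω => ?_))
  have he₂ : Measurable fun y => (e y).2 := measurable_snd.comp e.measurable
  have hF' : Measurable fun t => F (e.symm ((e fun i => X i ω).1, t)) :=
    hF.comp (e.symm.measurable.comp measurable_prodMk_left)
  rw [hlaw]
  exact (integral_map he₂.aemeasurable hF'.aestronglyMeasurable).trans
    (integral_congr_ae (.of_forall fun y => congrArg F (hmerge _ y)))

theorem condExp_condExp_sigmaGen {f : (∀ i, E i) → ℝ} (hf : Measurable f)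
    (hint : Integrable (fun ω => f fun i => X i ω) μ)
    (L K : Finset (Fin n)) :
    μ[μ[fun ω => f fun i => X i ω | sigmaGen X L] | sigmaGen X K] =ᵐ[μ]
      μ[fun ω => f fun i => X i ω | sigmaGen X (L ∩ K)] := by
  set ρ := μ.map fun ω i => X i ω
  have hG := condExp_sigmaGen_eq_integralOutside hX hindep hf hint L
  have hH := condExp_sigmaGen_eq_integralOutside hX hindep (measurable_integralOutside hf L)
    (integrable_condExp.congr hG) K
  have hVK := (condExp_congr_ae hG).trans hH
  have hHm : Measurable[sigmaGen X (L ∩ K)] fun ω =>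
      integralOutside ρ K (integralOutside ρ L f) fun i => X i ω :=
    measurable_sigmaGen_of_dependsOn X
      (measurable_integralOutside (measurable_integralOutside hf L) K)
      ((((dependsOn_univ f).integralOutside L).integralOutside K).mono (by simp))
  calc μ[μ[fun ω => f fun i => X i ω | sigmaGen X L] | sigmaGen X K]
      =ᵐ[μ] _ := hVK
    _ =ᵐ[μ] μ[μ[fun ω => f fun i => X i ω | sigmaGen X L] | sigmaGen X (L ∩ K)] :=
      (condExp_ae_eq_of_le_of_condExp_ae_eq (sigmaGen_mono X inter_subset_right)
        (sigmaGen_le hX K) hVK hHm.stronglyMeasurable (integrable_condExp.congr hVK)).symm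
    _ =ᵐ[μ] _ := condExp_condExp_of_le (sigmaGen_mono X inter_subset_left) (sigmaGen_le hX L)

theorem condExp_hoeff_sigmaGen {f : (∀ i, E i) → ℝ} (hf : Measurable f)
    (hint : Integrable (fun ω => f fun i => X i ω) μ)
    (J K : Finset (Fin n)) :
    μ[hoeff μ X (fun ω => f fun i => X i ω) J | sigmaGen X K] =ᵐ[μ]
      if J ⊆ K then hoeff μ X (fun ω => f fun i => X i ω) J else 0 := by
  have hsum : μ[hoeff μ X (fun ω => f fun i => X i ω) J | sigmaGen X K] =ᵐ[μ]
      ∑ L ∈ J.powerset, (-1 : ℝ) ^ (#J - #L) •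
        μ[fun ω => f fun i => X i ω | sigmaGen X (L ∩ K)] :=
    (condExp_finsetSum (fun _ _ => integrable_condExp.smul _) _).trans
      (eventuallyEq_sum fun L _ => (condExp_smul _ _ _).trans
        ((condExp_condExp_sigmaGen hX hindep hf hint L K).const_smul _))
  split_ifs with hJK
  · refine hsum.trans (.of_eq (Finset.sum_congr rfl fun L hL => ?_))
    rw [Finset.inter_eq_left.mpr ((Finset.mem_powerset.mp hL).trans hJK)]
  · obtain ⟨j, hjJ, hjK⟩ := Finset.not_subset.mp hJK
    refine hsum.trans (.of_eq (Finset.sum_powerset_neg_one_pow_smul_eq_zero hjJ fun L => ?_))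
    rw [Finset.insert_inter_of_notMem hjK]

theorem sum_condExp_sigmaGen_erase {f : (∀ i, E i) → ℝ} (hf : Measurable f)
    (hint : Integrable (fun ω => f fun i => X i ω) μ)
    {d : ℕ} (hdeg : IsDegenUStat μ X (fun ω => f fun i => X i ω) d) :
    ∑ j, μ[fun ω => f fun i => X i ω | sigmaGen X (univ.erase j)] =ᵐ[μ]
      ((n : ℝ) - d) • fun ω => f fun i => X i ω := by
  set W : Ω → ℝ := fun ω => f fun i => X i ω
  have hdeg' : W =ᵐ[μ] ∑ J ∈ DD n d, hoeff μ X W J := by rwa [Finset.sum_fn]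
  have hj : ∀ j, μ[W | sigmaGen X (univ.erase j)] =ᵐ[μ]
      ∑ J ∈ DD n d, if j ∈ J then 0 else hoeff μ X W J := fun j =>
    (condExp_congr_ae hdeg').trans <|
      (condExp_finsetSum (fun J _ => integrable_hoeff X W J) _).trans <|
        eventuallyEq_sum fun J _ => (condExp_hoeff_sigmaGen hX hindep hf hint J _).trans
          (.of_eq (by simp [Finset.subset_erase, W]))
  have hcount : ∀ J ∈ DD n d, ∑ j, (if j ∈ J then 0 else hoeff μ X W J)
      = ((n : ℝ) - d) • hoeff μ X W J := fun J hJ => by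
    have hJn : #J ≤ n := (Finset.card_le_univ J).trans_eq (Fintype.card_fin n)
    rw [Finset.sum_ite, Finset.sum_const_zero, zero_add, Finset.sum_const,
      Finset.filter_notMem_eq_sdiff, Finset.card_univ_sdiff, Fintype.card_fin,
      ← Nat.cast_smul_eq_nsmul ℝ, Nat.cast_sub hJn, (Finset.mem_filter.mp hJ).2]
  refine (eventuallyEq_sum fun j _ => hj j).trans ?_
  rw [Finset.sum_comm, Finset.sum_congr rfl hcount, ← Finset.smul_sum]
  exact hdeg'.symm.const_smul _

end Hoeffding

theorem ite_eq_piecewise_univ_erase {ι : Type*} [Fintype ι] [DecidableEq ι] {E : ι → Type*}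
    (a : ι) (x y : ∀ i, E i) :
    (fun j => if a = j then y j else x j) = (univ.erase a).piecewise x y := by
  ext j
  by_cases h : a = j
  · subst h; simp
  · simp [h, Function.update_of_ne (Ne.symm h)]

section Resampling

variable {Ω : Type*} [MeasurableSpace Ω] {μ : Measure Ω} [IsProbabilityMeasure μ]
  {n : ℕ} {E : Fin n → Type*} [∀ i, MeasurableSpace (E i)] {X Y : ∀ i, Ω → E i}
  (hX : ∀ i, Measurable (X i)) (hY : ∀ i, Measurable (Y i)) (hindep : iIndepFun X μ)
  (hcopy : μ.map (fun ω i => Y i ω) = μ.map (fun ω i => X i ω))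
  (hXY : IndepFun (fun ω i => X i ω) (fun ω i => Y i ω) μ)
include hX hY hindep hcopy hXY

theorem map_piecewise_eq_map (K : Finset (Fin n)) :
    μ.map (fun ω => K.piecewise (fun i => X i ω) (fun i => Y i ω)) = μ.map fun ω i => X i ω := by
  have : ∀ i, IsProbabilityMeasure (μ.map (X i)) :=
    fun i => Measure.isProbabilityMeasure_map (hX i).aemeasurable
  have hXv : Measurable fun ω i => X i ω := measurable_pi_lambda _ hX
  have hYv : Measurable fun ω i => Y i ω := measurable_pi_lambda _ hY
  have hpi := hindep.map_fun_eq_pi_map fun i => (hX i).aemeasurable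
  calc μ.map (fun ω => K.piecewise (fun i => X i ω) (fun i => Y i ω))
      = (μ.map fun ω => ((fun i => X i ω), fun i => Y i ω)).map fun p => K.piecewise p.1 p.2 :=
        (Measure.map_map (measurable_finset_piecewise K) (hXv.prodMk hYv)).symm
    _ = μ.map fun ω i => X i ω := by
      rw [(indepFun_iff_map_prod_eq_prod_map_map hXv.aemeasurable hYv.aemeasurable).mp hXY,
        hcopy, hpi, Measure.map_piecewise_pi_prod_pi]

variable {f : (∀ i, E i) → ℝ} (hf : Measurable f)
  (hint : Integrable (fun ω => f fun i => X i ω) μ)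
include hf hint

theorem integrable_comp_piecewise (K : Finset (Fin n)) :
    Integrable (fun ω => f (K.piecewise (fun i => X i ω) (fun i => Y i ω))) μ := by
  have hXv : Measurable fun ω i => X i ω := measurable_pi_lambda _ hX
  have hpw : Measurable fun ω => K.piecewise (fun i => X i ω) (fun i => Y i ω) :=
    (measurable_finset_piecewise K).comp (hXv.prodMk (measurable_pi_lambda _ hY))
  refine (integrable_map_measure hf.aestronglyMeasurable hpw.aemeasurable).mp ?_
  rw [map_piecewise_eq_map hX hY hindep hcopy hXY]
  exact (integrable_map_measure hf.aestronglyMeasurable hXv.aemeasurable).mpr hint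

theorem condExp_comp_piecewise (K : Finset (Fin n)) :
    μ[fun ω => f (K.piecewise (fun i => X i ω) (fun i => Y i ω)) | sigmaGen X univ] =ᵐ[μ]
      μ[fun ω => f fun i => X i ω | sigmaGen X K] := by
  rw [sigmaGen_univ]
  refine (hXY.condExp_comap_eq_integral (measurable_pi_lambda _ hX) (measurable_pi_lambda _ hY)
    (φ := fun x y => f (K.piecewise x y)) (hf.comp (measurable_finset_piecewise K))
    (integrable_comp_piecewise hX hY hindep hcopy hXY hf hint K)).trans ?_
  rw [hcopy]
  exact (condExp_sigmaGen_eq_integralOutside hX hindep hf hint K).symm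

theorem integrable_resample {α : Ω → Fin n} (hα : Measurable α) :
    Integrable (fun ω => f fun j => if α ω = j then Y j ω else X j ω) μ := by
  refine Integrable.mono' (integrable_finsetSum univ fun j _ =>
    (integrable_comp_piecewise hX hY hindep hcopy hXY hf hint (univ.erase j)).norm) ?_
    (.of_forall fun ω => ?_)
  · exact (hf.comp (measurable_pi_lambda _ fun j =>
      Measurable.ite (hα (measurableSet_singleton j)) (hY j) (hX j))).aestronglyMeasurable
  · rw [ite_eq_piecewise_univ_erase]
    exact Finset.single_le_sum (f := fun j => ‖f ((univ.erase j).piecewise _ _)‖)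
      (fun _ _ => norm_nonneg _) (mem_univ (α ω))

theorem condExp_resample_comap_prod {α : Ω → Fin n} (hα : Measurable α)
    (hXYα : IndepFun (fun ω => ((fun i => X i ω), fun i => Y i ω)) α μ)
    (hunif : ∀ j, μ (α ⁻¹' {j}) = (n : ENNReal)⁻¹) :
    μ[fun ω => f fun j => if α ω = j then Y j ω else X j ω |
        MeasurableSpace.comap (fun ω => ((fun i => X i ω), fun i => Y i ω)) inferInstance]
      =ᵐ[μ] (n : ℝ)⁻¹ •
        ∑ j, fun ω => f ((univ.erase j).piecewise (fun i => X i ω) (fun i => Y i ω)) := by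
  have hφ : Measurable fun q : ((∀ i, E i) × (∀ i, E i)) × Fin n =>
      f ((univ.erase q.2).piecewise q.1.1 q.1.2) :=
    measurable_from_prod_countable_left fun j =>
      hf.comp (measurable_finset_piecewise (univ.erase j))
  have hW' := integrable_resample hX hY hindep hcopy hXY hf hint hα
  simp only [ite_eq_piecewise_univ_erase] at hW' ⊢
  refine (hXYα.condExp_comap_eq_integral ((measurable_pi_lambda _ hX).prodMk
    (measurable_pi_lambda _ hY)) hα (φ := fun p a => f ((univ.erase a).piecewise p.1 p.2))
    hφ hW').trans (.of_forall fun ω => ?_)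
  have hα_law : ∀ j, (μ.map α).real {j} = (n : ℝ)⁻¹ := fun j => by
    rw [measureReal_def, Measure.map_apply hα (measurableSet_singleton j), hunif,
      ENNReal.toReal_inv, ENNReal.toReal_natCast]
  simp only [integral_fintype Integrable.of_finite, hα_law, Finset.smul_sum, Pi.smul_apply,
    Finset.sum_apply]

theorem condExp_resample {α : Ω → Fin n} (hα : Measurable α)
    (hXYα : IndepFun (fun ω => ((fun i => X i ω), fun i => Y i ω)) α μ)
    (hunif : ∀ j, μ (α ⁻¹' {j}) = (n : ENNReal)⁻¹) :
    μ[fun ω => f fun j => if α ω = j then Y j ω else X j ω | sigmaGen X univ] =ᵐ[μ]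
      (n : ℝ)⁻¹ • ∑ j, μ[fun ω => f fun i => X i ω | sigmaGen X (univ.erase j)] := by
  have hXYm : Measurable fun ω => ((fun i => X i ω), fun i => Y i ω) :=
    (measurable_pi_lambda _ hX).prodMk (measurable_pi_lambda _ hY)
  have hle : sigmaGen X univ ≤ MeasurableSpace.comap
      (fun ω => ((fun i => X i ω), fun i => Y i ω)) inferInstance := by
    rw [sigmaGen_univ]
    exact Measurable.comap_le (f := fun ω i => X i ω)
      (measurable_fst.comp (comap_measurable fun ω => ((fun i => X i ω), fun i => Y i ω)))
  calc μ[fun ω => f fun j => if α ω = j then Y j ω else X j ω | sigmaGen X univ]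
      =ᵐ[μ] μ[μ[fun ω => f fun j => if α ω = j then Y j ω else X j ω |
          MeasurableSpace.comap (fun ω => ((fun i => X i ω), fun i => Y i ω)) inferInstance] |
          sigmaGen X univ] := (condExp_condExp_of_le hle hXYm.comap_le).symm
    _ =ᵐ[μ] μ[(n : ℝ)⁻¹ • ∑ j, fun ω =>
          f ((univ.erase j).piecewise (fun i => X i ω) (fun i => Y i ω)) | sigmaGen X univ] :=
      condExp_congr_ae
        (condExp_resample_comap_prod hX hY hindep hcopy hXY hf hint hα hXYα hunif)
    _ =ᵐ[μ] _ := (condExp_smul _ _ _).trans <| .const_smul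
      ((condExp_finsetSum (fun j _ =>
          integrable_comp_piecewise hX hY hindep hcopy hXY hf hint _) _).trans
        (eventuallyEq_sum fun j _ => condExp_comp_piecewise hX hY hindep hcopy hXY hf hint _)) _

end Resampling

theorem linear_regression_exchangeable_pair
    {Ω : Type*} [m0 : MeasurableSpace Ω] (μ : Measure Ω) [IsProbabilityMeasure μ]
    {n : ℕ} (hn : 0 < n) {E : Fin n → Type*} [∀ i, MeasurableSpace (E i)]
    (X Y : ∀ i, Ω → E i) (α : Ω → Fin n)
    (hX : ∀ i, Measurable (X i)) (hY : ∀ i, Measurable (Y i)) (hα : Measurable α)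
    (hindep : iIndepFun X μ)
    -- `Y` is an independent copy of `X` and `X, Y, α` are jointly independent:
    (hcopy : Measure.map (fun ω i => Y i ω) μ = Measure.map (fun ω i => X i ω) μ)
    (hXY : IndepFun (fun ω i => X i ω) (fun ω i => Y i ω) μ)
    (hXYα : IndepFun (fun ω => ((fun i => X i ω), fun i => Y i ω)) α μ)
    -- `α` is uniformly distributed on `{1, …, n}`:
    (hunif : ∀ j : Fin n, μ (α ⁻¹' {j}) = (n : ENNReal)⁻¹)
    (f : (∀ i, E i) → ℝ) (hf : Measurable f)
    (W : Ω → ℝ) (hWdef : W = fun ω => f (fun i => X i ω))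
    (hW2 : MemLp W 2 μ) (d : ℕ) (hdeg : IsDegenUStat μ X W d)
    -- the resampled vector `X'` and `W' = f(X')`:
    (W' : Ω → ℝ)
    (hW'def : W' = fun ω => f (fun j => if α ω = j then Y j ω else X j ω)) :
    μ[(fun ω => W' ω - W ω) | sigmaGen X Finset.univ] =ᵐ[μ]
        (fun ω => -((d : ℝ) / n) * W ω) ∧
      μ[(fun ω => W' ω - W ω) | MeasurableSpace.comap W inferInstance] =ᵐ[μ]
        (fun ω => -((d : ℝ) / n) * W ω) := by
  subst hWdef hW'def
  have hint := hW2.integrable one_le_two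
  have hWm : Measurable[sigmaGen X univ] fun ω => f fun i => X i ω := by
    rw [sigmaGen_univ]; exact hf.comp (comap_measurable _)
  have hmain : μ[fun ω => (f fun j => if α ω = j then Y j ω else X j ω) - f fun i => X i ω |
      sigmaGen X univ] =ᵐ[μ] fun ω => -((d : ℝ) / n) * f fun i => X i ω := by
    refine (condExp_sub (integrable_resample hX hY hindep hcopy hXY hf hint hα) hint _).trans ?_
    rw [condExp_of_stronglyMeasurable (sigmaGen_le hX univ) hWm.stronglyMeasurable hint]
    filter_upwards [condExp_resample hX hY hindep hcopy hXY hf hint hα hXYα hunif,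
      sum_condExp_sigmaGen_erase hX hindep hf hint hdeg] with ω hres hsum
    simp only [Pi.sub_apply, hres, Pi.smul_apply, hsum, smul_eq_mul]
    field_simp
    ring
  refine ⟨hmain, condExp_ae_eq_of_le_of_condExp_ae_eq ?_ (sigmaGen_le hX univ) hmain
    (((comap_measurable _).const_mul _).stronglyMeasurable) (hint.const_mul _)⟩
  exact hWm.comap_le
end
end
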